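/- arXiv:1405.3460 — 2 statements merged into one kernel-verified Lean document; each statement's English description precedes it below -/
import Mathlib

section
/- (Dictated independence for OLF) Let S and S' be two OLF systems on the same odd number n of actors with the same vertex set, and let i be an actor having exactly one predecessor in both systems, i.e., |P_G(i)| = |P_{G'}(i)| = 1. Then SAT_S(i) = SAT_{S'}(i). -/
open Finset

/-- The set of predecessors of `i` in the digraph with edge set `E`. -/
def preds {n : ℕ} (E : Finset (Fin n × Fin n)) (i : Fin n) : Finset (Fin n) :=
  Finset.univ.filter (fun j => (j, i) ∈ E)

/-- The set of successors of `i` in the digraph with edge set `E`. -/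
def succs {n : ℕ} (E : Finset (Fin n × Fin n)) (i : Fin n) : Finset (Fin n) :=
  Finset.univ.filter (fun j => (i, j) ∈ E)

/-- `E` is the edge set of an OLF system: every edge runs from a vertex with no
predecessors (an opinion leader) to a vertex with no successors (a follower). -/
def IsOLF {n : ℕ} (E : Finset (Fin n × Fin n)) : Prop :=
  ∀ e ∈ E, preds E e.1 = ∅ ∧ succs E e.2 = ∅

/-- One step of the unanimity rule: actor `i` adopts the common decision of its
predecessors (as recorded in `c`) if they are nonempty and unanimous, and keeps
its own initial decision `x i` otherwise. -/
def unanStep {n : ℕ} (E : Finset (Fin n × Fin n)) (x c : Fin n → Bool) (i : Fin n) : Bool :=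
  if (preds E i).Nonempty ∧ ∀ j ∈ preds E i, c j = true then true
  else if (preds E i).Nonempty ∧ ∀ j ∈ preds E i, c j = false then false
  else x i

/-- The collective decision vector of an OLF system. -/
def olfVec {n : ℕ} (E : Finset (Fin n × Fin n)) (x : Fin n → Bool) : Fin n → Bool :=
  unanStep E x x

/-- Simple majority over a decision vector. -/
def majority {n : ℕ} (c : Fin n → Bool) : Bool :=
  decide ((Finset.univ.filter (fun i => c i = true)).card >
          (Finset.univ.filter (fun i => c i = false)).card)

/-- The collective decision function of an OLF system. -/
def olfC {n : ℕ} (E : Finset (Fin n × Fin n)) (x : Fin n → Bool) : Bool :=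
  majority (olfVec E x)

/-- The satisfaction score of actor `i` under a collective decision making model `C`. -/
def SAT {n : ℕ} (C : (Fin n → Bool) → Bool) (i : Fin n) : ℕ :=
  (Finset.univ.filter (fun x : Fin n → Bool => C x = x i)).card
/-!
An actor `i` with a single predecessor `j` is a follower, so the unanimity rule sets `c_i = x_j`
and `x_i` is read by nobody: the collective decision does not depend on `x_i`. Flipping `x_i` is
then an involution exchanging the profiles where `i` is satisfied with those where it is not, so
`SAT(i) = 2^(n-1)` in every such system.
-/

section Unanimity

variable {n : ℕ} {E : Finset (Fin n × Fin n)}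

theorem mem_preds_iff {i j : Fin n} : j ∈ preds E i ↔ (j, i) ∈ E := by
  simp [preds]

theorem IsOLF.succs_eq_empty_of_mem_preds (hE : IsOLF E) {i j : Fin n} (hj : j ∈ preds E i) :
    succs E i = ∅ :=
  (hE _ (mem_preds_iff.mp hj)).2

theorem IsOLF.notMem_preds_of_mem_preds (hE : IsOLF E) {i j k : Fin n} (hj : j ∈ preds E i) :
    i ∉ preds E k := by
  intro hi
  have : k ∈ succs E i := by simpa [succs] using mem_preds_iff.mp hi
  simp [hE.succs_eq_empty_of_mem_preds hj] at this

theorem unanStep_congr {x c c' : Fin n → Bool} {k : Fin n}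
    (h : ∀ j ∈ preds E k, c j = c' j) : unanStep E x c k = unanStep E x c' k := by
  have hc : ∀ b, (∀ j ∈ preds E k, c j = b) ↔ ∀ j ∈ preds E k, c' j = b :=
    fun b => forall₂_congr fun j hj => by rw [h j hj]
  simp only [unanStep, hc]

theorem unanStep_of_preds_eq_singleton {x c : Fin n → Bool} {k j : Fin n}
    (h : preds E k = {j}) : unanStep E x c k = c j := by
  cases hcj : c j <;> simp [unanStep, h, hcj]

theorem olfVec_update_of_card_preds_eq_one (hE : IsOLF E) {i : Fin n}
    (hP : (preds E i).card = 1) (x : Fin n → Bool) (b : Bool) :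
    olfVec E (Function.update x i b) = olfVec E x := by
  obtain ⟨j, hj⟩ := Finset.card_eq_one.mp hP
  have hj_mem : j ∈ preds E i := by simp [hj]
  have hji : j ≠ i := fun h => hE.notMem_preds_of_mem_preds hj_mem (h ▸ hj_mem)
  funext k
  by_cases hk : k = i
  · subst hk
    simp only [olfVec, unanStep_of_preds_eq_singleton hj, Function.update_of_ne hji]
  · have hx : ∀ j' ∈ preds E k, Function.update x i b j' = x j' := fun j' hj' =>
      Function.update_of_ne (fun h => hE.notMem_preds_of_mem_preds hj_mem (h ▸ hj')) b x
    rw [olfVec, olfVec, unanStep_congr hx]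
    simp only [unanStep, Function.update_of_ne hk]

end Unanimity

theorem two_mul_SAT_eq_two_pow {n : ℕ} (C : (Fin n → Bool) → Bool) (i : Fin n)
    (hC : ∀ x b, C (Function.update x i b) = C x) :
    2 * SAT C i = 2 ^ n := by
  let flip : (Fin n → Bool) → (Fin n → Bool) := fun x => Function.update x i (!x i)
  have flip_flip : ∀ x, flip (flip x) = x := fun x => by simp [flip]
  have satisfied_iff_flip : ∀ x, C (flip x) = flip x i ↔ ¬C x = x i := fun x => by
    simp only [flip, hC, Function.update_self]
    cases C x <;> cases x i <;> decide
  have hswap : SAT C i = #{x | ¬C x = x i} :=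
    Finset.card_nbij' flip flip
      (fun x hx => by simpa [← satisfied_iff_flip, flip_flip] using hx)
      (fun x hx => by simpa [satisfied_iff_flip] using hx)
      (fun x _ => flip_flip x) (fun x _ => flip_flip x)
  calc 2 * SAT C i = SAT C i + #{x | ¬C x = x i} := by omega
    _ = 2 ^ n := by simp [SAT, Finset.card_filter_add_card_filter_not]

theorem two_mul_SAT_olfC_eq_two_pow {n : ℕ} {E : Finset (Fin n × Fin n)} (hE : IsOLF E)
    {i : Fin n} (hP : (preds E i).card = 1) : 2 * SAT (olfC E) i = 2 ^ n :=
  two_mul_SAT_eq_two_pow _ i fun x b => by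
    simp only [olfC, olfVec_update_of_card_preds_eq_one hE hP]

theorem olf_dictated_independence_general (n : ℕ)
    (E E' : Finset (Fin n × Fin n)) (hE : IsOLF E) (hE' : IsOLF E')
    (i : Fin n) (hP : (preds E i).card = 1) (hP' : (preds E' i).card = 1) :
    SAT (olfC E) i = SAT (olfC E') i :=
  Nat.eq_of_mul_eq_mul_left two_pos
    ((two_mul_SAT_olfC_eq_two_pow hE hP).trans (two_mul_SAT_olfC_eq_two_pow hE' hP').symm)

/-- Dictated independence for OLF systems: an actor having exactly one
predecessor in each of two OLF systems on the same vertex set has the same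
satisfaction score in both. -/
theorem olf_dictated_independence (n : ℕ) (hn : Odd n)
    (E E' : Finset (Fin n × Fin n)) (hE : IsOLF E) (hE' : IsOLF E')
    (i : Fin n) (hP : (preds E i).card = 1) (hP' : (preds E' i).card = 1) :
    SAT (olfC E) i = SAT (olfC E') i :=
  olf_dictated_independence_general n E E' hE hE' i hP hP'
end

section
/- (Horizontal neutrality for OLFM) Let S and S' be two OLFM systems on the same odd number n of actors with the same vertex set, where in S actor i is an opinion leader or independent actor, actor j is a follower, actor h is an opinion leader with h ∈ P_G(j), and E(G') = E(G) ∪ {(i,j)}. Then SAT_{S'}(i) - SAT_S(i) = SAT_S(h) - SAT_{S'}(h). -/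
open Finset

/-- `layer` witnesses that `E` is a layered digraph: every edge goes from a
vertex in some layer to a vertex in the layer immediately below. -/
def IsLayered {n : ℕ} (E : Finset (Fin n × Fin n)) (layer : Fin n → ℕ) : Prop :=
  ∀ e ∈ E, layer e.2 = layer e.1 + 1

/-- `E` is the edge set of an OLFM system, i.e. a layered digraph. -/
def IsOLFM {n : ℕ} (E : Finset (Fin n × Fin n)) : Prop :=
  ∃ layer : Fin n → ℕ, IsLayered E layer

/-- The collective decision vector of an OLFM system, computed layer by layer:
since each layer only depends on the one above it, iterating the unanimity step
`n` times computes the stable, layer-by-layer collective decision vector. -/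
def olfmVec {n : ℕ} (E : Finset (Fin n × Fin n)) (x : Fin n → Bool) : Fin n → Bool :=
  (fun c => unanStep E x c)^[n] x

/-- The collective decision function of an OLFM system. -/
def olfmC {n : ℕ} (E : Finset (Fin n × Fin n)) (x : Fin n → Bool) : Bool :=
  majority (olfmVec E x)

/-!
Both `i` and `h` are sources, so they keep their initial decisions in every round of the
unanimity iteration. For a profile with `x i = x h`, the new predecessor `i` of `j` therefore
always votes like the existing predecessor `h`, and adding the edge `(i, j)` changes no round:
the collective decision is the same in both systems. For a profile with `x i ≠ x h`, exactly
one of `i` and `h` agrees with any collective decision. So in each profile the number of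
satisfied actors among `i` and `h` is the same in both systems, and summing over all profiles
gives `SAT_{S'}(i) + SAT_{S'}(h) = SAT_S(i) + SAT_S(h)`.
-/

section

variable {n : ℕ}

@[simp]
theorem mem_preds {E : Finset (Fin n × Fin n)} {p v : Fin n} : p ∈ preds E v ↔ (p, v) ∈ E := by
  simp [preds]

theorem preds_insert_of_ne (E : Finset (Fin n × Fin n)) (i : Fin n) {j v : Fin n} (hv : v ≠ j) :
    preds (insert (i, j) E) v = preds E v := by
  ext p
  simp [hv]

theorem preds_insert_self (E : Finset (Fin n × Fin n)) (i j : Fin n) :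
    preds (insert (i, j) E) j = insert i (preds E j) := by
  ext p
  simp

theorem unanStep_of_preds_eq_empty {E : Finset (Fin n × Fin n)} (x c : Fin n → Bool) {v : Fin n}
    (hv : preds E v = ∅) : unanStep E x c v = x v := by
  simp [unanStep, hv]

theorem iterate_unanStep_of_preds_eq_empty {E : Finset (Fin n × Fin n)} (x : Fin n → Bool)
    {v : Fin n} (hv : preds E v = ∅) (t : ℕ) : (fun c => unanStep E x c)^[t] x v = x v := by
  cases t with
  | zero => rfl
  | succ t =>
    rw [Function.iterate_succ_apply']
    exact unanStep_of_preds_eq_empty _ _ hv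

theorem unanStep_insert_of_eq {E : Finset (Fin n × Fin n)} {i j p : Fin n} (x : Fin n → Bool)
    {c : Fin n → Bool} (hp : p ∈ preds E j) (hc : c i = c p) :
    unanStep (insert (i, j) E) x c = unanStep E x c := by
  funext v
  by_cases hv : v = j
  · subst hv
    have hunan : ∀ b, (∀ q ∈ insert i (preds E v), c q = b) ↔ ∀ q ∈ preds E v, c q = b :=
      fun b => ⟨fun H q hq => H q (mem_insert_of_mem hq),
        fun H => forall_mem_insert .. |>.2 ⟨hc.trans (H p hp), H⟩⟩
    have hne : (preds E v).Nonempty := ⟨p, hp⟩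
    simp only [unanStep, preds_insert_self, hunan, insert_nonempty, hne, true_and]
  · simp only [unanStep, preds_insert_of_ne E i hv]

theorem iterate_unanStep_insert_of_eq {E : Finset (Fin n × Fin n)} {i j h : Fin n}
    (hi : preds E i = ∅) (hhP : preds E h = ∅) (hhj : h ∈ preds E j) {x : Fin n → Bool}
    (hx : x i = x h) (t : ℕ) :
    (fun c => unanStep (insert (i, j) E) x c)^[t] x = (fun c => unanStep E x c)^[t] x := by
  induction t with
  | zero => rfl
  | succ t ih =>
    rw [Function.iterate_succ_apply', Function.iterate_succ_apply', ih]
    refine unanStep_insert_of_eq x hhj ?_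
    rw [iterate_unanStep_of_preds_eq_empty x hi, iterate_unanStep_of_preds_eq_empty x hhP, hx]

theorem olfmC_insert_of_eq {E : Finset (Fin n × Fin n)} {i j h : Fin n}
    (hi : preds E i = ∅) (hhP : preds E h = ∅) (hhj : h ∈ preds E j) {x : Fin n → Bool}
    (hx : x i = x h) : olfmC (insert (i, j) E) x = olfmC E x :=
  congrArg majority (iterate_unanStep_insert_of_eq hi hhP hhj hx n)

theorem SAT_add_SAT_eq_of_forall_eq {C C' : (Fin n → Bool) → Bool} {i h : Fin n}
    (hC : ∀ x : Fin n → Bool, x i = x h → C' x = C x) :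
    SAT C' i + SAT C' h = SAT C i + SAT C h := by
  simp only [SAT, card_filter, ← sum_add_distrib]
  refine sum_congr rfl fun x _ => ?_
  by_cases hx : x i = x h
  · rw [hC x hx]
  · cases C' x <;> cases C x <;> cases hxi : x i <;> cases hxh : x h <;> simp_all

end

theorem olfm_horizontal_neutrality_general (n : ℕ)
    (E : Finset (Fin n × Fin n))
    (i j h : Fin n)
    (hi : preds E i = ∅)
    (hhP : preds E h = ∅) (hhj : h ∈ preds E j) :
    (SAT (olfmC (insert (i, j) E)) i : ℤ) - SAT (olfmC E) i =
      (SAT (olfmC E) h : ℤ) - SAT (olfmC (insert (i, j) E)) h := by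
  have hsum := SAT_add_SAT_eq_of_forall_eq fun _ => olfmC_insert_of_eq hi hhP hhj
  omega

/-- Horizontal neutrality for OLFM systems: if `i` is an opinion leader or
independent actor, `j` is a follower, `h` is an opinion leader of `j`, and the
second system is obtained by adding the edge `(i, j)`, then the gain of `i`
equals the loss of `h`. -/
theorem olfm_horizontal_neutrality (n : ℕ) (hn : Odd n)
    (E : Finset (Fin n × Fin n)) (layer : Fin n → ℕ) (hL : IsLayered E layer)
    (i j h : Fin n) (hij : i ≠ j) (hih : i ≠ h) (hjh : j ≠ h)
    (hi : preds E i = ∅)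
    (hjP : (preds E j).Nonempty) (hjS : succs E j = ∅)
    (hhP : preds E h = ∅) (hhj : h ∈ preds E j)
    (hE' : IsOLFM (insert (i, j) E)) :
    (SAT (olfmC (insert (i, j) E)) i : ℤ) - SAT (olfmC E) i =
      (SAT (olfmC E) h : ℤ) - SAT (olfmC (insert (i, j) E)) h :=
  olfm_horizontal_neutrality_general n E i j h hi hhP hhj
end
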